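/- arXiv:2306.13343 — 6 statements merged into one kernel-verified Lean document; each statement's English description precedes it below -/
import Mathlib

section
/- For a, b > 0 and ρ ∈ (-1, 1), the function g(ρ) = (a² + 2ρab + b²)/(1 - ρ²) attains its minimum over ρ ∈ [ρ̲, ρ̄] (with -1 < ρ̲ ≤ 0 ≤ ρ̄ < 1) at ρ̂ = max{ρ̲, -a/b, -b/a}, and the minimum value equals a² + 2ρ̂ab + b² divided by 1 - ρ̂². -/
/-!
Cross-multiplying, `g y - g x` has the sign of
`(y - x) * ((y a + b)(x b + a) + (y b + a)(x a + b))`, essentially `g'(ρ) ∝ (ρ a + b)(ρ b + a)`.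
Both factors are nonnegative above `m = max (-(a/b)) (-(b/a))`, and on `(-1, m]` exactly one
of them is nonpositive, because `(-(a/b)) * (-(b/a)) = 1` puts the smaller of the two
below `-1`. So `g` decreases on `(-1, m]` and increases on `[m, 1)`, and its minimum over
`[ρ̲, ρ̄] ∋ 0` sits at `max ρ̲ m`.
-/

noncomputable def marketPriceOfRiskSq (a b ρ : ℝ) : ℝ :=
  (a ^ 2 + 2 * ρ * a * b + b ^ 2) / (1 - ρ ^ 2)

section

variable {a b x y : ℝ}

lemma neg_div_le_iff_nonneg_mul_add (hb : 0 < b) : -(a / b) ≤ x ↔ 0 ≤ x * b + a := by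
  rw [neg_le, le_div_iff₀ hb]
  constructor <;> intro h <;> linarith

lemma marketPriceOfRiskSq_le_of_cross_nonneg (hx : x ∈ Set.Ioo (-1) 1) (hy : y ∈ Set.Ioo (-1) 1)
    (h : 0 ≤ (y - x) * ((y * a + b) * (x * b + a) + (y * b + a) * (x * a + b))) :
    marketPriceOfRiskSq a b x ≤ marketPriceOfRiskSq a b y := by
  have hx2 : 0 < 1 - x ^ 2 := by nlinarith [hx.1, hx.2]
  have hy2 : 0 < 1 - y ^ 2 := by nlinarith [hy.1, hy.2]
  unfold marketPriceOfRiskSq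
  rw [div_le_div_iff₀ hx2 hy2]
  have cross : (a ^ 2 + 2 * y * a * b + b ^ 2) * (1 - x ^ 2)
      - (a ^ 2 + 2 * x * a * b + b ^ 2) * (1 - y ^ 2)
      = (y - x) * ((y * a + b) * (x * b + a) + (y * b + a) * (x * a + b)) := by ring
  linarith

lemma cross_nonpos_of_le_neg_div (ha : 0 < a) (hb : 0 < b) (hx : -1 < x) (hxy : x ≤ y)
    (hy : y ≤ -(a / b)) :
    (y * a + b) * (x * b + a) + (y * b + a) * (x * a + b) ≤ 0 := by
  have hyb : y * b + a ≤ 0 := by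
    rw [le_neg, div_le_iff₀ hb] at hy
    linarith
  have hxb : x * b + a ≤ 0 := by nlinarith
  have hab : a < b := by
    have : -1 < -(a / b) := hx.trans_le (hxy.trans hy)
    rw [neg_lt_neg_iff, div_lt_one hb] at this
    exact this
  have hxa : 0 ≤ x * a + b := by nlinarith
  have hya : 0 ≤ y * a + b := by nlinarith
  linarith [mul_nonpos_of_nonneg_of_nonpos hya hxb, mul_nonpos_of_nonpos_of_nonneg hyb hxa]

lemma marketPriceOfRiskSq_monotoneOn (ha : 0 < a) (hb : 0 < b) :
    MonotoneOn (marketPriceOfRiskSq a b)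
      (Set.Ioo (-1) 1 ∩ Set.Ici (max (-(a / b)) (-(b / a)))) := by
  rintro x ⟨hx, hxm⟩ y ⟨hy, -⟩ hxy
  rw [Set.mem_Ici, max_le_iff, neg_div_le_iff_nonneg_mul_add hb,
    neg_div_le_iff_nonneg_mul_add ha] at hxm
  obtain ⟨hxb, hxa⟩ := hxm
  refine marketPriceOfRiskSq_le_of_cross_nonneg hx hy (mul_nonneg (sub_nonneg.2 hxy) ?_)
  have hyb : 0 ≤ y * b + a := by nlinarith
  have hya : 0 ≤ y * a + b := by nlinarith
  positivity

lemma marketPriceOfRiskSq_antitoneOn (ha : 0 < a) (hb : 0 < b) :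
    AntitoneOn (marketPriceOfRiskSq a b)
      (Set.Ioo (-1) 1 ∩ Set.Iic (max (-(a / b)) (-(b / a)))) := by
  rintro x ⟨hx, -⟩ y ⟨hy, hym⟩ hxy
  refine marketPriceOfRiskSq_le_of_cross_nonneg hy hx
    (mul_nonneg_of_nonpos_of_nonpos (sub_nonpos.2 hxy) ?_)
  -- the cross term is symmetric in `a` and `b`
  rcases le_max_iff.1 (Set.mem_Iic.1 hym) with hym | hym
  · linarith [cross_nonpos_of_le_neg_div ha hb hx.1 hxy hym]
  · linarith [cross_nonpos_of_le_neg_div hb ha hx.1 hxy hym]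

end

/-- For `a, b > 0`, the squared worst-case market price of risk
`g(ρ) = (a² + 2ρab + b²)/(1 - ρ²)` attains its minimum over `ρ ∈ [ρ̲, ρ̄]`
(with `-1 < ρ̲ ≤ 0 ≤ ρ̄ < 1`) at `ρ̂ = max{ρ̲, -a/b, -b/a}`, and the minimum
value equals `(a² + 2ρ̂ab + b²)/(1 - ρ̂²)`. -/
theorem worst_case_correlation_minimizes (a b ρlo ρhi : ℝ)
    (ha : 0 < a) (hb : 0 < b)
    (h1 : -1 < ρlo) (h2 : ρlo ≤ 0) (h3 : 0 ≤ ρhi) (h4 : ρhi < 1) :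
    (max ρlo (max (-(a/b)) (-(b/a))) ∈ Set.Icc ρlo ρhi) ∧
    IsMinOn (fun ρ : ℝ => (a^2 + 2*ρ*a*b + b^2) / (1 - ρ^2)) (Set.Icc ρlo ρhi)
      (max ρlo (max (-(a/b)) (-(b/a)))) ∧
    (fun ρ : ℝ => (a^2 + 2*ρ*a*b + b^2) / (1 - ρ^2)) (max ρlo (max (-(a/b)) (-(b/a)))) =
      (a^2 + 2*(max ρlo (max (-(a/b)) (-(b/a))))*a*b + b^2) /
        (1 - (max ρlo (max (-(a/b)) (-(b/a))))^2) := by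
  set m := max (-(a / b)) (-(b / a))
  have hm : m ≤ 0 := max_le (neg_nonpos.2 (div_pos ha hb).le) (neg_nonpos.2 (div_pos hb ha).le)
  have hr : max ρlo m ∈ Set.Icc ρlo ρhi := ⟨le_max_left _ _, (max_le h2 hm).trans h3⟩
  have hIcc : Set.Icc ρlo ρhi ⊆ Set.Ioo (-1) 1 := Set.Icc_subset_Ioo h1 h4
  refine ⟨hr, fun ρ hρ => ?_, rfl⟩
  change marketPriceOfRiskSq a b (max ρlo m) ≤ marketPriceOfRiskSq a b ρ
  rcases le_or_gt (max ρlo m) ρ with hrρ | hρr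
  · exact marketPriceOfRiskSq_monotoneOn ha hb ⟨hIcc hr, Set.mem_Ici.2 (le_max_right _ _)⟩
      ⟨hIcc hρ, Set.mem_Ici.2 ((le_max_right _ _).trans hrρ)⟩ hrρ
  · have hρm : ρ < m := (lt_max_iff.1 hρr).resolve_left (not_lt.2 hρ.1)
    exact marketPriceOfRiskSq_antitoneOn ha hb ⟨hIcc hρ, Set.mem_Iic.2 hρm.le⟩
      ⟨hIcc hr, Set.mem_Iic.2 (max_le (hρ.1.trans hρm.le) le_rfl)⟩ hρr.le
end

section
/- For a, b > 0 and ρ ∈ (-1,1), the quantity (a² + 2ρab + b²)/(1-ρ²) is nonincreasing in ρ on the interval (-1, max{-a/b, -b/a}] and nondecreasing on [max{-a/b, -b/a}, 1); in particular its unique minimizer on (-1,1) is ρ* = max{-a/b, -b/a} = -min{a,b}/max{a,b}. -/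
/-!
Writing `f ρ = (a² + 2ρab + b²)/(1 - ρ²)`, one has the exact difference quotient
`(f ρ - f σ)(1 - ρ²)(1 - σ²) = (ρ - σ)((aρ + b)(bσ + a) + (aσ + b)(bρ + a))`,
a two-point version of `f' = 2(aρ + b)(bρ + a)/(1 - ρ²)²`. For `ρ > -1` the factors `aρ + b` and
`bρ + a` have positive sum `(a + b)(1 + ρ)`, so on `(-1, ρ*]` one of them is nonpositive and the other
positive, while on `[ρ*, 1)` both are nonnegative. Hence `f` is strictly decreasing, then strictly
increasing, with its minimum at `ρ* = max{-a/b, -b/a}`.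
-/

open Set

noncomputable def sqMarketPriceOfRisk (a b ρ : ℝ) : ℝ := (a^2 + 2*ρ*a*b + b^2) / (1 - ρ^2)

noncomputable def optimalCorrelation (a b : ℝ) : ℝ := max (-(a/b)) (-(b/a))

section

variable {a b : ℝ}

theorem sqMarketPriceOfRisk_sub_sqMarketPriceOfRisk {ρ σ : ℝ} (hρ : 1 - ρ^2 ≠ 0)
    (hσ : 1 - σ^2 ≠ 0) :
    sqMarketPriceOfRisk a b ρ - sqMarketPriceOfRisk a b σ =
      (ρ - σ) * ((a*ρ + b)*(b*σ + a) + (a*σ + b)*(b*ρ + a)) / ((1 - ρ^2) * (1 - σ^2)) := by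
  unfold sqMarketPriceOfRisk
  field_simp
  ring

theorem one_sub_sq_pos {ρ : ℝ} (hρ : ρ ∈ Ioo (-1 : ℝ) 1) : 0 < 1 - ρ^2 := by
  nlinarith [hρ.1, hρ.2]

theorem sqMarketPriceOfRisk_lt_of_pos {ρ σ : ℝ} (hσ : σ ∈ Ioo (-1 : ℝ) 1)
    (hρ : ρ ∈ Ioo (-1 : ℝ) 1) (hσρ : σ < ρ)
    (h : 0 < (a*ρ + b)*(b*σ + a) + (a*σ + b)*(b*ρ + a)) :
    sqMarketPriceOfRisk a b σ < sqMarketPriceOfRisk a b ρ := by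
  have hρ' := one_sub_sq_pos hρ
  have hσ' := one_sub_sq_pos hσ
  rw [← sub_pos, sqMarketPriceOfRisk_sub_sqMarketPriceOfRisk hρ'.ne' hσ'.ne']
  exact div_pos (mul_pos (sub_pos.2 hσρ) h) (mul_pos hρ' hσ')

theorem sqMarketPriceOfRisk_lt_of_neg {ρ σ : ℝ} (hσ : σ ∈ Ioo (-1 : ℝ) 1)
    (hρ : ρ ∈ Ioo (-1 : ℝ) 1) (hσρ : σ < ρ)
    (h : (a*ρ + b)*(b*σ + a) + (a*σ + b)*(b*ρ + a) < 0) :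
    sqMarketPriceOfRisk a b ρ < sqMarketPriceOfRisk a b σ := by
  have hρ' := one_sub_sq_pos hρ
  have hσ' := one_sub_sq_pos hσ
  rw [← sub_neg, sqMarketPriceOfRisk_sub_sqMarketPriceOfRisk hρ'.ne' hσ'.ne']
  exact div_neg_of_neg_of_pos (mul_neg_of_pos_of_neg (sub_pos.2 hσρ) h) (mul_pos hρ' hσ')

theorem sqMarketPriceOfRisk_neg_one : sqMarketPriceOfRisk a b (-1) = 0 := by
  simp [sqMarketPriceOfRisk]

theorem sqMarketPriceOfRisk_pos (ha : 0 < a) (hb : 0 < b) {ρ : ℝ} (hρ : ρ ∈ Ioo (-1 : ℝ) 1) :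
    0 < sqMarketPriceOfRisk a b ρ := by
  have hnum : 0 < a^2 + 2*ρ*a*b + b^2 := by
    nlinarith [sq_nonneg (a - b), mul_pos (mul_pos ha hb) (neg_lt_iff_pos_add.1 hρ.1)]
  exact div_pos hnum (one_sub_sq_pos hρ)

theorem neg_div_le_iff_nonneg (hb : 0 < b) {σ : ℝ} : -(a/b) ≤ σ ↔ 0 ≤ b*σ + a := by
  rw [← neg_div, div_le_iff₀ hb]
  constructor <;> intro h <;> linarith

theorem le_neg_div_iff_nonpos (hb : 0 < b) {σ : ℝ} : σ ≤ -(a/b) ↔ b*σ + a ≤ 0 := by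
  rw [← neg_div, le_div_iff₀ hb]
  constructor <;> intro h <;> linarith

theorem optimalCorrelation_le_iff (ha : 0 < a) (hb : 0 < b) {σ : ℝ} :
    optimalCorrelation a b ≤ σ ↔ 0 ≤ b*σ + a ∧ 0 ≤ a*σ + b := by
  rw [optimalCorrelation, max_le_iff, neg_div_le_iff_nonneg hb, neg_div_le_iff_nonneg ha]

theorem le_optimalCorrelation_iff (ha : 0 < a) (hb : 0 < b) {σ : ℝ} :
    σ ≤ optimalCorrelation a b ↔ b*σ + a ≤ 0 ∨ a*σ + b ≤ 0 := by
  rw [optimalCorrelation, le_max_iff, le_neg_div_iff_nonpos hb, le_neg_div_iff_nonpos ha]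

theorem neg_one_le_optimalCorrelation (ha : 0 < a) (hb : 0 < b) :
    -1 ≤ optimalCorrelation a b := by
  rw [le_optimalCorrelation_iff ha hb]
  rcases le_total a b with h | h
  · left; linarith
  · right; linarith

theorem optimalCorrelation_neg (ha : 0 < a) (hb : 0 < b) : optimalCorrelation a b < 0 :=
  max_lt (neg_neg_of_pos (div_pos ha hb)) (neg_neg_of_pos (div_pos hb ha))

theorem optimalCorrelation_eq (ha : 0 < a) (hb : 0 < b) :
    optimalCorrelation a b = -(min a b / max a b) := by
  rcases le_total a b with h | h
  · rw [min_eq_left h, max_eq_right h, optimalCorrelation, max_eq_left]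
    rw [neg_le_neg_iff, div_le_div_iff₀ hb ha]
    nlinarith
  · rw [min_eq_right h, max_eq_left h, optimalCorrelation, max_eq_right]
    rw [neg_le_neg_iff, div_le_div_iff₀ ha hb]
    nlinarith

theorem mul_add_add_mul_add_pos (ha : 0 < a) (hb : 0 < b) {x : ℝ} (hx : -1 < x) :
    0 < (a*x + b) + (b*x + a) := by
  nlinarith [mul_pos (add_pos ha hb) (neg_lt_iff_pos_add.1 hx)]

theorem strictAntiOn_sqMarketPriceOfRisk (ha : 0 < a) (hb : 0 < b) :
    StrictAntiOn (sqMarketPriceOfRisk a b) (Ioc (-1) (optimalCorrelation a b)) := by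
  rintro σ ⟨hσ₁, hσ₂⟩ ρ ⟨-, hρ₂⟩ hσρ
  have hρ_lt : ρ < 1 := hρ₂.trans_lt (optimalCorrelation_neg ha hb |>.trans one_pos)
  refine sqMarketPriceOfRisk_lt_of_neg ⟨hσ₁, hσρ.trans hρ_lt⟩ ⟨hσ₁.trans hσρ, hρ_lt⟩ hσρ ?_
  have hsumσ := mul_add_add_mul_add_pos ha hb hσ₁
  have hsumρ := mul_add_add_mul_add_pos ha hb (hσ₁.trans hσρ)
  rcases (le_optimalCorrelation_iff ha hb).1 hρ₂ with h | h
  · have hσ : b*σ + a < 0 := by nlinarith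
    nlinarith [mul_neg_of_pos_of_neg (by linarith : 0 < a*ρ + b) hσ,
      mul_nonpos_of_nonneg_of_nonpos (by linarith : 0 ≤ a*σ + b) h]
  · have hσ : a*σ + b < 0 := by nlinarith
    nlinarith [mul_neg_of_neg_of_pos hσ (by linarith : 0 < b*ρ + a),
      mul_nonpos_of_nonpos_of_nonneg h (by linarith : 0 ≤ b*σ + a)]

theorem strictMonoOn_sqMarketPriceOfRisk (ha : 0 < a) (hb : 0 < b) :
    StrictMonoOn (sqMarketPriceOfRisk a b) (Ico (optimalCorrelation a b) 1) := by
  rintro σ ⟨hσ₁, hσ₂⟩ ρ ⟨-, hρ₂⟩ hσρ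
  have hρ : ρ ∈ Ioo (-1 : ℝ) 1 :=
    ⟨(neg_one_le_optimalCorrelation ha hb).trans_lt (hσ₁.trans_lt hσρ), hρ₂⟩
  rcases (neg_one_le_optimalCorrelation ha hb |>.trans hσ₁).eq_or_lt with rfl | hσ
  · -- `ρ* = -1` forces `a = b`, and then `f (-1)` is the junk value `0 / 0 = 0`.
    rw [sqMarketPriceOfRisk_neg_one]
    exact sqMarketPriceOfRisk_pos ha hb hρ
  refine sqMarketPriceOfRisk_lt_of_pos ⟨hσ, hσ₂⟩ hρ hσρ ?_
  obtain ⟨h₁, h₂⟩ := (optimalCorrelation_le_iff ha hb).1 hσ₁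
  have hsum := mul_add_add_mul_add_pos ha hb hσ
  have hρa : b*σ + a < b*ρ + a := by nlinarith
  have hρb : a*σ + b < a*ρ + b := by nlinarith
  rcases lt_or_ge 0 (b*σ + a) with h | h
  · nlinarith [mul_pos (h₂.trans_lt hρb) h, mul_nonneg h₂ (h₁.trans hρa.le)]
  · nlinarith [mul_pos (by linarith : 0 < a*σ + b) (h₁.trans_lt hρa),
      mul_nonneg (h₂.trans hρb.le) h₁]

theorem sqMarketPriceOfRisk_optimalCorrelation_lt (ha : 0 < a) (hb : 0 < b) {ρ : ℝ}
    (hρ : ρ ∈ Ioo (-1 : ℝ) 1) (hne : ρ ≠ optimalCorrelation a b) :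
    sqMarketPriceOfRisk a b (optimalCorrelation a b) < sqMarketPriceOfRisk a b ρ := by
  rcases hne.lt_or_gt with h | h
  · exact strictAntiOn_sqMarketPriceOfRisk ha hb ⟨hρ.1, h.le⟩ ⟨hρ.1.trans h, le_rfl⟩ h
  · exact strictMonoOn_sqMarketPriceOfRisk ha hb
      ⟨le_rfl, (optimalCorrelation_neg ha hb).trans one_pos⟩ ⟨h.le, hρ.2⟩ h

end

/-- For `a, b > 0`, the map `ρ ↦ (a² + 2ρab + b²)/(1-ρ²)` is nonincreasing on
`(-1, max{-a/b, -b/a}]` and nondecreasing on `[max{-a/b, -b/a}, 1)`; its unique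
minimizer on `(-1,1)` is `ρ* = max{-a/b, -b/a} = -min{a,b}/max{a,b}`. -/
theorem squared_mpr_monotonicity (a b : ℝ) (ha : 0 < a) (hb : 0 < b) :
    AntitoneOn (fun ρ : ℝ => (a^2 + 2*ρ*a*b + b^2) / (1 - ρ^2))
      (Set.Ioc (-1 : ℝ) (max (-(a/b)) (-(b/a)))) ∧
    MonotoneOn (fun ρ : ℝ => (a^2 + 2*ρ*a*b + b^2) / (1 - ρ^2))
      (Set.Ico (max (-(a/b)) (-(b/a))) 1) ∧
    (∀ ρ ∈ Set.Ioo (-1 : ℝ) 1, ρ ≠ max (-(a/b)) (-(b/a)) →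
      (a^2 + 2*(max (-(a/b)) (-(b/a)))*a*b + b^2) / (1 - (max (-(a/b)) (-(b/a)))^2) <
      (a^2 + 2*ρ*a*b + b^2) / (1 - ρ^2)) ∧
    max (-(a/b)) (-(b/a)) = -(min a b / max a b) :=
  ⟨(strictAntiOn_sqMarketPriceOfRisk ha hb).antitoneOn,
    (strictMonoOn_sqMarketPriceOfRisk ha hb).monotoneOn,
    fun _ hρ hne => sqMarketPriceOfRisk_optimalCorrelation_lt ha hb hρ hne,
    optimalCorrelation_eq ha hb⟩
end

section
/- Let Σ be the volatility matrix with rows (-cσ_r, 0) and (σ_S ρ, σ_S√(1-ρ²)), c, σ_r, σ_S > 0, ρ ∈ (-1,1), and ν = (σ_r, 0)ᵀ. Then (Σᵀ)⁻¹ ν = (-1/c, 0)ᵀ; in particular the interest-rate-hedging portfolio -(Σᵀ)⁻¹ν b(T-t) = (b(T-t)/c, 0)ᵀ involves only the bond and is independent of σ_r, σ_S, and ρ. -/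
open Matrix

/-! The transpose of the lower-triangular volatility matrix `Σ` is upper triangular, so
`Σᵀ` maps the first basis direction to a multiple of itself: `Σᵀ (x, 0) = (-c σ_r x, 0)`.
Inverting, `(Σᵀ)⁻¹ (σ_r, 0) = (σ_r / (-c σ_r), 0) = (-1/c, 0)`, and the stock-volatility
entries never enter. -/

theorem inv_transpose_lowerTriangular_mulVec {K : Type*} [Field K] {a d : K} (ha : a ≠ 0)
    (hd : d ≠ 0) (b y : K) :
    (!![a, 0; b, d]ᵀ)⁻¹ *ᵥ ![y, 0] = ![y / a, 0] := by
  have : Invertible (!![a, 0; b, d]ᵀ) :=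
    invertibleOfIsUnitDet _ (by simp [det_fin_two_of, ha, hd])
  refine inv_mulVec_eq_vec ?_
  ext i
  fin_cases i <;> simp [field]

/-- With `Σ` the bond/stock volatility matrix and `ν = (σ_r, 0)ᵀ` the short-rate
diffusion, `(Σᵀ)⁻¹ ν = (-1/c, 0)ᵀ`; in particular the interest-rate-hedging
portfolio `-(Σᵀ)⁻¹ ν · b(T-t) = (b(T-t)/c, 0)ᵀ` involves only the bond and is
independent of `σ_r`, `σ_S`, and `ρ`. -/
theorem hedge_portfolio_closed_form (c σr σS ρ h : ℝ)
    (hc : 0 < c) (hσr : 0 < σr) (hσS : 0 < σS) (hρ : ρ ∈ Set.Ioo (-1 : ℝ) 1) :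
    ((!![-(c*σr), 0; σS*ρ, σS*Real.sqrt (1-ρ^2)] : Matrix (Fin 2) (Fin 2) ℝ)ᵀ)⁻¹
      *ᵥ ![σr, 0] = ![-(1/c), 0] ∧
    -(h • (((!![-(c*σr), 0; σS*ρ, σS*Real.sqrt (1-ρ^2)] : Matrix (Fin 2) (Fin 2) ℝ)ᵀ)⁻¹
      *ᵥ ![σr, 0])) = ![h/c, 0] := by
  have hsqrt : 0 < Real.sqrt (1 - ρ^2) := Real.sqrt_pos.mpr (by nlinarith [hρ.1, hρ.2])
  have key := inv_transpose_lowerTriangular_mulVec (neg_ne_zero.mpr (by positivity : c*σr ≠ 0))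
    (by positivity : σS * Real.sqrt (1 - ρ^2) ≠ 0) (σS*ρ) σr
  have hratio : σr / -(c*σr) = -(1/c) := by field_simp
  rw [hratio] at key
  refine ⟨key, ?_⟩
  rw [key]
  ext i
  fin_cases i <;> simp [div_eq_mul_inv]
end

section
/- Martingale optimality principle with multiple priors: Let u be a utility function, T > 0, and for each strategy π in an admissible set Π let 𝒫_π = {P_{π,θ} : θ ∈ Θ} be a set of priors. Suppose there is a function V with V(T,W,r) = u(W), a strategy π̂ ∈ Π, and θ̂ ∈ Θ such that (V(t,W_t,r_t))_t is a P_{π̂,θ̂}-martingale, a P_{π,θ̂}-supermartingale for every π ∈ Π, and P_{π̂,θ̂} is a worst-case prior for π̂ (i.e., inf over 𝒫_{π̂} of E[u(W_T)] is attained at P_{π̂,θ̂}). Then sup_{π∈Π} inf_{P∈𝒫_π} E_P[u(W_T)] = inf_{P∈𝒫_{π̂}} E_P[u(W_T)] = V(0, W₀, r₀). -/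
/-! The value `V₀` bounds every `π`'s worst case from above, since that worst case is at most
its expectation under `θ̂`, which is at most `V₀` by the supermartingale property. Since `π̂`'s
worst case attains `V₀`, the maximin is attained at `π̂`. -/

open MeasureTheory

section Maximin

variable {ι κ α : Type*} [ConditionallyCompleteLattice α]

theorem ciSup_eq_of_forall_le_apply {f : ι → α} (i₀ : ι) (h : ∀ i, f i ≤ f i₀) :
    ⨆ i, f i = f i₀ :=
  IsGreatest.csSup_eq ⟨⟨i₀, rfl⟩, Set.forall_mem_range.2 h⟩

theorem ciSup_ciInf_eq_of_saddle (f : ι → κ → α) (i₀ : ι) (j₀ : κ)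
    (hbdd : ∀ i, BddBelow (Set.range (f i))) (hmin : ⨅ j, f i₀ j = f i₀ j₀)
    (hmax : ∀ i, f i j₀ ≤ f i₀ j₀) :
    ⨆ i, ⨅ j, f i j = ⨅ j, f i₀ j :=
  ciSup_eq_of_forall_le_apply i₀ fun i => hmin ▸ (ciInf_le (hbdd i) j₀).trans (hmax i)

end Maximin

theorem martingale_optimality_principle_multiple_priors_general
    {S Θ' Ω : Type*} [MeasurableSpace Ω]
    (P : S → Θ' → Measure Ω) (u : ℝ → ℝ) (WT : Ω → ℝ) (V₀ : ℝ)
    (πhat : S) (θhat : Θ')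
    (hbdd : ∀ π : S, BddBelow (Set.range fun θ : Θ' => ∫ ω, u (WT ω) ∂(P π θ)))
    (hmart : ∫ ω, u (WT ω) ∂(P πhat θhat) = V₀)
    (hsupermart : ∀ π : S, ∫ ω, u (WT ω) ∂(P π θhat) ≤ V₀)
    (hworst : (⨅ θ : Θ', ∫ ω, u (WT ω) ∂(P πhat θ)) = ∫ ω, u (WT ω) ∂(P πhat θhat)) :
    (⨆ π : S, ⨅ θ : Θ', ∫ ω, u (WT ω) ∂(P π θ)) =
      (⨅ θ : Θ', ∫ ω, u (WT ω) ∂(P πhat θ)) ∧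
    (⨅ θ : Θ', ∫ ω, u (WT ω) ∂(P πhat θ)) = V₀ :=
  ⟨ciSup_ciInf_eq_of_saddle (fun π θ => ∫ ω, u (WT ω) ∂(P π θ)) πhat θhat hbdd hworst
      fun π => hmart ▸ hsupermart π,
    hworst.trans hmart⟩

/-- Martingale optimality principle with multiple priors (Proposition 1): for
each admissible strategy `π` in a (nonempty) set of strategies `S` and each
scenario `θ` in a (nonempty) set of scenarios `Θ'`, let `P π θ` be the induced
prior on path space `Ω` and `f = u(W_T)` the utility of terminal wealth.
Suppose there are `π̂`, `θ̂` and a value `V₀ = V(0, W₀, r₀)` such that the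
martingale property of the value function under `P π̂ θ̂` gives
`E_{P π̂ θ̂}[u(W_T)] = V₀`, the supermartingale property under `P π θ̂` gives
`E_{P π θ̂}[u(W_T)] ≤ V₀` for every `π`, and `P π̂ θ̂` is a worst-case prior for
`π̂`, i.e. `⨅ θ, E_{P π̂ θ}[u(W_T)] = E_{P π̂ θ̂}[u(W_T)]`. Then
`⨆ π, ⨅ θ, E_{P π θ}[u(W_T)] = ⨅ θ, E_{P π̂ θ}[u(W_T)] = V₀`. -/
theorem martingale_optimality_principle_multiple_priors
    {S Θ' Ω : Type*} [Nonempty S] [Nonempty Θ'] [MeasurableSpace Ω]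
    (P : S → Θ' → Measure Ω) (u : ℝ → ℝ) (WT : Ω → ℝ) (V₀ : ℝ)
    (πhat : S) (θhat : Θ')
    (hbdd : ∀ π : S, BddBelow (Set.range fun θ : Θ' => ∫ ω, u (WT ω) ∂(P π θ)))
    (hmart : ∫ ω, u (WT ω) ∂(P πhat θhat) = V₀)
    (hsupermart : ∀ π : S, ∫ ω, u (WT ω) ∂(P π θhat) ≤ V₀)
    (hworst : (⨅ θ : Θ', ∫ ω, u (WT ω) ∂(P πhat θ)) = ∫ ω, u (WT ω) ∂(P πhat θhat)) :
    (⨆ π : S, ⨅ θ : Θ', ∫ ω, u (WT ω) ∂(P π θ)) =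
      (⨅ θ : Θ', ∫ ω, u (WT ω) ∂(P πhat θ)) ∧
    (⨅ θ : Θ', ∫ ω, u (WT ω) ∂(P πhat θ)) = V₀ :=
  martingale_optimality_principle_multiple_priors_general P u WT V₀ πhat θhat hbdd hmart hsupermart
    hworst
end

section
/- Both speculative portfolio weights are nonnegative under the worst-case scenario: for any a, b > 0 and ρ̲ ∈ (-1,0], setting ρ̂ = max{ρ̲, -a/b, -b/a}, the quantities (a + ρ̂b)/(1-ρ̂²) and (b + ρ̂a)/(1-ρ̂²) are both ≥ 0. In particular, the ambiguity-averse investor never shorts the bond or the stock for speculative reasons. -/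
theorem add_mul_nonneg_of_neg_div_le {a b ρ : ℝ} (hb : 0 < b) (h : -(a / b) ≤ ρ) :
    0 ≤ a + ρ * b := by
  rw [neg_le, le_div_iff₀ hb] at h
  linarith

theorem speculative_weight_nonneg {a b ρ : ℝ} (hb : 0 < b) (h : -(a / b) ≤ ρ) (hρ : |ρ| < 1) :
    0 ≤ (a + ρ * b) / (1 - ρ ^ 2) :=
  div_nonneg (add_mul_nonneg_of_neg_div_le hb h) (sub_pos.2 ((sq_lt_one_iff_abs_lt_one ρ).2 hρ)).le

/-- Both speculative portfolio weights are nonnegative under the worst-case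
scenario: for `a, b > 0` and `ρ̲ ∈ (-1,0]`, with `ρ̂ = max{ρ̲, -a/b, -b/a}`,
both `(a + ρ̂b)/(1-ρ̂²) ≥ 0` and `(b + ρ̂a)/(1-ρ̂²) ≥ 0`; the ambiguity-averse
investor never shorts the bond or the stock for speculative reasons. -/
theorem speculative_weights_nonneg (a b ρlo : ℝ)
    (ha : 0 < a) (hb : 0 < b) (hρ : ρlo ∈ Set.Ioc (-1 : ℝ) 0) :
    0 ≤ (a + max ρlo (max (-(a/b)) (-(b/a))) * b) /
          (1 - (max ρlo (max (-(a/b)) (-(b/a))))^2) ∧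
    0 ≤ (b + max ρlo (max (-(a/b)) (-(b/a))) * a) /
          (1 - (max ρlo (max (-(a/b)) (-(b/a))))^2) := by
  obtain ⟨hlo, hle⟩ := hρ
  set ρ := max ρlo (max (-(a/b)) (-(b/a)))
  have hρ_nonpos : ρ ≤ 0 :=
    max_le hle (max_le (neg_nonpos.2 (div_pos ha hb).le) (neg_nonpos.2 (div_pos hb ha).le))
  have hρ_abs : |ρ| < 1 := abs_lt.2 ⟨hlo.trans_le (le_max_left _ _), by linarith⟩
  exact ⟨speculative_weight_nonneg hb ((le_max_left _ _).trans (le_max_right _ _)) hρ_abs,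
    speculative_weight_nonneg ha ((le_max_right _ _).trans (le_max_right _ _)) hρ_abs⟩
end

section
/- Monotonicity in risk aversion: with π̂^B(γ) = (1/γ)M_B + ((γ-1)/γ)H and π̂^S(γ) = (1/γ)M_S for fixed M_B, M_S ≥ 0 and H > 0 with M_S > 0, the bond-stock ratio π̂^B(γ)/π̂^S(γ) = (M_B + (γ-1)H)/M_S is strictly increasing in γ on (1, ∞). -/
theorem bond_stock_ratio_eq (MB MS H : ℝ) {γ : ℝ} (hγ : γ ≠ 0) :
    ((1/γ) * MB + ((γ-1)/γ) * H) / ((1/γ) * MS) = (MB + (γ-1) * H) / MS := by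
  field_simp

theorem strictMono_affine_div {MS H : ℝ} (MB : ℝ) (hMS : 0 < MS) (hH : 0 < H) :
    StrictMono fun γ : ℝ => (MB + (γ-1) * H) / MS := fun a b hab => by
  dsimp only
  gcongr

theorem bond_stock_ratio_strictMono_general (MB MS H : ℝ)
    (hMS : 0 < MS) (hH : 0 < H) :
    (∀ γ ∈ Set.Ioi (1 : ℝ),
      ((1/γ) * MB + ((γ-1)/γ) * H) / ((1/γ) * MS) = (MB + (γ-1) * H) / MS) ∧
    StrictMonoOn (fun γ : ℝ => ((1/γ) * MB + ((γ-1)/γ) * H) / ((1/γ) * MS))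
      (Set.Ioi (1 : ℝ)) := by
  have hratio : ∀ γ ∈ Set.Ioi (1 : ℝ),
      ((1/γ) * MB + ((γ-1)/γ) * H) / ((1/γ) * MS) = (MB + (γ-1) * H) / MS :=
    fun γ hγ => bond_stock_ratio_eq MB MS H (zero_lt_one.trans hγ).ne'
  refine ⟨hratio, ?_⟩
  exact ((strictMono_affine_div MB hMS hH).strictMonoOn _).congr fun γ hγ => (hratio γ hγ).symm

/-- Monotonicity of the bond-stock ratio in risk aversion: with
`π̂^B(γ) = (1/γ)M_B + ((γ-1)/γ)H` and `π̂^S(γ) = (1/γ)M_S` for fixed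
`M_B ≥ 0`, `M_S > 0` and `H > 0`, the bond-stock ratio satisfies
`π̂^B(γ)/π̂^S(γ) = (M_B + (γ-1)H)/M_S` and is strictly increasing in `γ`
on `(1, ∞)`. -/
theorem bond_stock_ratio_strictMono (MB MS H : ℝ)
    (hMB : 0 ≤ MB) (hMS : 0 < MS) (hH : 0 < H) :
    (∀ γ ∈ Set.Ioi (1 : ℝ),
      ((1/γ) * MB + ((γ-1)/γ) * H) / ((1/γ) * MS) = (MB + (γ-1) * H) / MS) ∧
    StrictMonoOn (fun γ : ℝ => ((1/γ) * MB + ((γ-1)/γ) * H) / ((1/γ) * MS))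
      (Set.Ioi (1 : ℝ)) :=
  bond_stock_ratio_strictMono_general MB MS H hMS hH
end
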